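/- Let λ = (a_1,…,a_n) ∈ ℂ^n with a_1 − a_2 ∉ ℤ and a_i ≻ a_{i+1} for all 2 ≤ i ≤ n−1. For 1 ≤ m ≤ n−1 set μ := s_m s_{m−1} ⋯ s_1 * λ (apply s_1 first, then s_2, …, then s_m) and write μ = (c_1,…,c_n). Then: (1) c_{i−1} ≻ c_i for all 2 ≤ i ≤ m; (2) for every 1 ≤ s ≤ n−1, it is NOT the case that s_s * μ < μ if and only if s ∈ {m, m+1}. -/
import Mathlib


open Finset

/-- The 1-based `i`-th coordinate of a weight `λ ∈ ℂ^n` (0 if out of range). -/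
def coord {n : ℕ} (lam : Fin n → ℂ) (i : ℕ) : ℂ :=
  if h : 1 ≤ i ∧ i ≤ n then lam ⟨i - 1, by omega⟩ else 0

/-- The star action of the generator `s_i` (1 ≤ i ≤ n-1) on weights:
swap coordinates `i` and `i+1` if their sum is nonzero, otherwise replace
`(λ_i, λ_{i+1})` by `(λ_{i+1} - 1, λ_i + 1)`. -/
noncomputable def sStar {n : ℕ} (i : ℕ) (lam : Fin n → ℂ) : Fin n → ℂ := fun j =>
  if (j : ℕ) + 1 = i then
    (if coord lam i + coord lam (i + 1) = 0 then coord lam (i + 1) - 1 else coord lam (i + 1))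
  else if (j : ℕ) = i then
    (if coord lam i + coord lam (i + 1) = 0 then coord lam i + 1 else coord lam i)
  else lam j

/-- The partial order on weights: `μ ≤ ν` iff each partial sum
`Σ_{j=1}^i (ν_j - μ_j)` (1 ≤ i ≤ n-1) is a nonnegative integer and the
total sum `Σ_{j=1}^n (ν_j - μ_j)` is zero. -/
def wle {n : ℕ} (mu nu : Fin n → ℂ) : Prop :=
  (∀ i : ℕ, 1 ≤ i → i ≤ n - 1 →
    ∃ m : ℕ, ∑ j ∈ Finset.Icc 1 i, (coord nu j - coord mu j) = (m : ℂ)) ∧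
  ∑ j ∈ Finset.Icc 1 n, (coord nu j - coord mu j) = 0

/-- Strict inequality of weights. -/
def wlt {n : ℕ} (mu nu : Fin n → ℂ) : Prop := wle mu nu ∧ mu ≠ nu

/-- `a ≻ b` iff `a - b ∈ ℤ_{>0}` or `a = b = 0`. -/
def csucc (a b : ℂ) : Prop := (∃ m : ℤ, 0 < m ∧ a - b = (m : ℂ)) ∨ (a = 0 ∧ b = 0)

/-- `starDesc j k λ = s_j s_{j+1} ⋯ s_k * λ` (apply `s_k` first, `s_j` last);
equals `λ` when `j > k`. -/
noncomputable def starDesc {n : ℕ} (j k : ℕ) (lam : Fin n → ℂ) : Fin n → ℂ :=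
  (List.range' j (k + 1 - j)).foldr (fun i mu => sStar i mu) lam

/-- `starAsc j k λ = s_k s_{k-1} ⋯ s_j * λ` (apply `s_j` first, `s_k` last);
equals `λ` when `j > k`. -/
noncomputable def starAsc {n : ℕ} (j k : ℕ) (lam : Fin n → ℂ) : Fin n → ℂ :=
  (List.range' j (k + 1 - j)).foldl (fun mu i => sStar i mu) lam

lemma coord_apply {n : ℕ} (lam : Fin n → ℂ) {i : ℕ} (h1 : 1 ≤ i) (h2 : i ≤ n) :
    coord lam i = lam ⟨i - 1, by omega⟩ := dif_pos ⟨h1, h2⟩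

lemma coord_sStar_self {n : ℕ} {i : ℕ} (hi1 : 1 ≤ i) (hin : i ≤ n) (lam : Fin n → ℂ) :
    coord (sStar i lam) i =
      if coord lam i + coord lam (i + 1) = 0 then coord lam (i + 1) - 1
      else coord lam (i + 1) := by
  rw [coord_apply _ hi1 hin]
  simp only [sStar]
  rw [if_pos (show i - 1 + 1 = i by omega)]

lemma coord_sStar_succ {n : ℕ} {i : ℕ} (hi1 : 1 ≤ i) (hin : i + 1 ≤ n) (lam : Fin n → ℂ) :
    coord (sStar i lam) (i + 1) =
      if coord lam i + coord lam (i + 1) = 0 then coord lam i + 1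
      else coord lam i := by
  rw [coord_apply _ (by omega) hin]
  simp only [sStar]
  rw [if_neg (show ¬ (i + 1 - 1 + 1 = i) by omega), if_pos (show i + 1 - 1 = i by omega)]

lemma coord_sStar_other {n : ℕ} {i j : ℕ} (hj1 : j ≠ i) (hj2 : j ≠ i + 1) (lam : Fin n → ℂ) :
    coord (sStar i lam) j = coord lam j := by
  unfold coord
  by_cases h : 1 ≤ j ∧ j ≤ n
  · rw [dif_pos h, dif_pos h]
    simp only [sStar]
    rw [if_neg (show ¬ (j - 1 + 1 = i) by omega), if_neg (show ¬ (j - 1 = i) by omega)]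
  · rw [dif_neg h, dif_neg h]
def down (x y : ℂ) : Prop :=
  ∃ k : ℕ, 0 < k ∧ x - y + (if x + y = 0 then 1 else 0) = (k : ℂ)

lemma csucc_down {x y : ℂ} (h : csucc x y) : down x y := by
  rcases h with ⟨m, hm, hxy⟩ | ⟨hx, hy⟩
  · by_cases hs : x + y = 0
    · refine ⟨m.toNat + 1, by omega, ?_⟩
      rw [if_pos hs, hxy]
      have : ((m.toNat : ℤ) : ℂ) = (m : ℂ) := by rw [Int.toNat_of_nonneg hm.le]
      push_cast
      push_cast at this
      rw [this]
    · refine ⟨m.toNat, by omega, ?_⟩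
      rw [if_neg hs, hxy]
      have : ((m.toNat : ℤ) : ℂ) = (m : ℂ) := by rw [Int.toNat_of_nonneg hm.le]
      push_cast at this ⊢
      rw [this, add_zero]
  · exact ⟨1, one_pos, by simp [hx, hy]⟩

lemma not_down {x y : ℂ} (h : ¬ ∃ z : ℤ, x - y = (z : ℂ)) : ¬ down x y := by
  rintro ⟨k, hk, heq⟩
  apply h
  by_cases hs : x + y = 0
  · rw [if_pos hs] at heq
    exact ⟨(k : ℤ) - 1, by push_cast; linear_combination heq⟩
  · rw [if_neg hs] at heq
    exact ⟨(k : ℤ), by push_cast; linear_combination heq⟩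

lemma csucc_int {x y : ℂ} (h : csucc x y) : ∃ z : ℤ, x - y = (z : ℂ) := by
  rcases h with ⟨m, _, hxy⟩ | ⟨hx, hy⟩
  · exact ⟨m, hxy⟩
  · exact ⟨0, by simp [hx, hy]⟩
lemma coord_apply' {n : ℕ} (mu : Fin n → ℂ) (j : Fin n) :
    coord mu ((j : ℕ) + 1) = mu j := by
  rw [coord_apply _ (by omega) (by omega)]
  exact congrArg mu (Fin.ext (by simp))

lemma wlt_iff {n : ℕ} {s : ℕ} (hs1 : 1 ≤ s) (hsn : s ≤ n - 1) (hn : 2 ≤ n) (mu : Fin n → ℂ) :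
    wlt (sStar s mu) mu ↔ down (coord mu s) (coord mu (s + 1)) := by
  have hsn' : s + 1 ≤ n := by omega
  set x := coord mu s with hx
  set y := coord mu (s + 1) with hy
  set δ : ℂ := x - y + (if x + y = 0 then 1 else 0) with hδ
  have hcs : coord (sStar s mu) s = y - (if x + y = 0 then 1 else 0) := by
    rw [coord_sStar_self hs1 (by omega) mu, ← hx, ← hy]
    split_ifs <;> ring
  have hcs1 : coord (sStar s mu) (s + 1) = x + (if x + y = 0 then 1 else 0) := by
    rw [coord_sStar_succ hs1 hsn' mu, ← hx, ← hy]
    split_ifs <;> ring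
  have hsum : ∀ i : ℕ, ∑ j ∈ Finset.Icc 1 i, (coord mu j - coord (sStar s mu) j)
      = (if s ∈ Finset.Icc 1 i then δ else 0) + (if s + 1 ∈ Finset.Icc 1 i then -δ else 0) := by
    intro i
    rw [show (∑ j ∈ Finset.Icc 1 i, (coord mu j - coord (sStar s mu) j))
        = ∑ j ∈ Finset.Icc 1 i, ((if j = s then δ else 0) + (if j = s + 1 then -δ else 0)) from
      Finset.sum_congr rfl (by
        intro j hj
        by_cases hjs : j = s
        · subst hjs
          rw [if_pos rfl, if_neg (by omega), hcs, ← hx, hδ]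
          ring
        · by_cases hjs1 : j = s + 1
          · subst hjs1
            rw [if_neg (by omega), if_pos rfl, hcs1, ← hy, hδ]
            ring
          · rw [if_neg hjs, if_neg hjs1, coord_sStar_other hjs hjs1]
            ring)]
    rw [Finset.sum_add_distrib, Finset.sum_ite_eq' _ s (fun _ => δ),
      Finset.sum_ite_eq' _ (s + 1) (fun _ => -δ)]
  have heqiff : sStar s mu = mu ↔ δ = 0 := by
    constructor
    · intro h
      have h' := congrArg (fun f => coord f s) h
      rw [hcs] at h'
      rw [hδ]
      linear_combination -h'
    · intro h
      funext j
      simp only [sStar]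
      split_ifs with h1 h2 h3 h4
      · have hj : mu j = x := by rw [hx, ← h1, coord_apply']
        rw [hj, ← hy]
        rw [hδ, if_pos h2] at h
        linear_combination -h
      · have hj : mu j = x := by rw [hx, ← h1, coord_apply']
        rw [hj, ← hy]
        rw [hδ, if_neg h2] at h
        linear_combination -h
      · have hj : mu j = y := by rw [hy, ← h3, coord_apply']
        rw [hj, ← hx]
        rw [hδ, if_pos h4] at h
        linear_combination h
      · have hj : mu j = y := by rw [hy, ← h3, coord_apply']
        rw [hj, ← hx]
        rw [hδ, if_neg h4] at h
        linear_combination h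
      · rfl
  constructor
  · rintro ⟨⟨hle, _⟩, hne⟩
    obtain ⟨k, hk⟩ := hle s hs1 hsn
    rw [hsum s, if_pos (by simp only [Finset.mem_Icc]; omega),
      if_neg (by simp only [Finset.mem_Icc]; omega), add_zero] at hk
    refine ⟨k, ?_, ?_⟩
    · rcases Nat.eq_zero_or_pos k with h0 | h0
      · subst h0
        exfalso
        apply hne
        rw [heqiff]
        simpa using hk
      · exact h0
    · rw [← hδ]; exact hk
  · rintro ⟨k, hk0, hk⟩
    rw [← hδ] at hk
    refine ⟨⟨?_, ?_⟩, ?_⟩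
    · intro i hi1 hi2
      rw [hsum i]
      by_cases hc1 : s + 1 ≤ i
      · refine ⟨0, ?_⟩
        rw [if_pos (by simp only [Finset.mem_Icc]; omega), if_pos (by simp only [Finset.mem_Icc]; omega)]
        push_cast; ring
      · by_cases hc2 : i < s
        · refine ⟨0, ?_⟩
          rw [if_neg (by simp only [Finset.mem_Icc]; omega), if_neg (by simp only [Finset.mem_Icc]; omega)]
          push_cast; ring
        · refine ⟨k, ?_⟩
          rw [if_pos (by simp only [Finset.mem_Icc]; omega), if_neg (by simp only [Finset.mem_Icc]; omega),
            add_zero, hk]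
    · rw [hsum n, if_pos (by simp only [Finset.mem_Icc]; omega),
        if_pos (by simp only [Finset.mem_Icc]; omega)]
      ring
    · rw [Ne, heqiff]
      intro h0
      rw [hk] at h0
      exact hk0.ne' (by exact_mod_cast h0)
lemma starAsc_one {n : ℕ} (lam : Fin n → ℂ) : starAsc 1 1 lam = sStar 1 lam := by
  unfold starAsc
  norm_num [List.range'_one]

lemma starAsc_succ {n : ℕ} (M : ℕ) (hM : 1 ≤ M) (lam : Fin n → ℂ) :
    starAsc 1 (M + 1) lam = sStar (M + 1) (starAsc 1 M lam) := by
  unfold starAsc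
  rw [show M + 1 + 1 - 1 = M + 1 from rfl, show M + 1 - 1 = M from rfl,
    List.range'_concat, List.foldl_append]
  simp [Nat.add_comm 1 M]
theorem stmt18 (n : ℕ) (hn : 2 ≤ n) (lam : Fin n → ℂ)
    (h1 : ¬ ∃ m : ℤ, coord lam 1 - coord lam 2 = (m : ℂ))
    (h2 : ∀ i, 2 ≤ i → i ≤ n - 1 → csucc (coord lam i) (coord lam (i + 1)))
    (m : ℕ) (hm1 : 1 ≤ m) (hm2 : m ≤ n - 1) :
    (∀ i, 2 ≤ i → i ≤ m →
      csucc (coord (starAsc 1 m lam) (i - 1)) (coord (starAsc 1 m lam) i)) ∧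
    (∀ s, 1 ≤ s → s ≤ n - 1 →
      (¬ wlt (sStar s (starAsc 1 m lam)) (starAsc 1 m lam) ↔ (s = m ∨ s = m + 1))) := by
  have chain : ∀ k, 2 ≤ k → k ≤ n → ∃ z : ℤ, coord lam 2 - coord lam k = (z : ℂ) := by
    intro k
    induction k with
    | zero => intro h _; omega
    | succ k ih =>
      intro hk2 hkn
      rcases Nat.lt_or_ge 2 (k + 1) with hlt | hle
      · have hk2' : 2 ≤ k := by omega
        obtain ⟨z, hz⟩ := ih hk2' (by omega)
        obtain ⟨w, hw⟩ := csucc_int (h2 k hk2' (by omega))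
        exact ⟨z + w, by push_cast; linear_combination hz + hw⟩
      · have hk : k + 1 = 2 := by omega
        rw [hk]
        exact ⟨0, by push_cast; ring⟩
  have h1k : ∀ k, 2 ≤ k → k ≤ n → ¬ ∃ z : ℤ, coord lam 1 - coord lam k = (z : ℂ) := by
    rintro k hk2 hkn ⟨z, hz⟩
    obtain ⟨w, hw⟩ := chain k hk2 hkn
    exact h1 ⟨z - w, by push_cast; linear_combination hz - hw⟩
  have inv : ∀ M, 1 ≤ M → M ≤ n - 1 →
      (∀ j, M + 1 < j → coord (starAsc 1 M lam) j = coord lam j) ∧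
      (∃ T : ℕ, coord (starAsc 1 M lam) (M + 1) = coord lam 1 + T) ∧
      ((coord (starAsc 1 M lam) M = coord lam (M + 1) ∧
          coord (starAsc 1 M lam) (M + 1) + coord (starAsc 1 M lam) M ≠ 0) ∨
       (coord (starAsc 1 M lam) M = coord lam (M + 1) - 1 ∧
          coord (starAsc 1 M lam) (M + 1) + coord (starAsc 1 M lam) M = 0)) ∧
      (∀ i, 2 ≤ i → i ≤ M → csucc (coord (starAsc 1 M lam) (i - 1))
          (coord (starAsc 1 M lam) i)) := by
    intro M hM1
    induction M, hM1 using Nat.le_induction with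
    | base =>
      intro _
      rw [starAsc_one]
      simp only [show (1 : ℕ) + 1 = 2 from rfl]
      have hA : coord (sStar 1 lam) 1
          = if coord lam 1 + coord lam 2 = 0 then coord lam 2 - 1 else coord lam 2 :=
        coord_sStar_self (by omega) (by omega) lam
      have hB : coord (sStar 1 lam) 2
          = if coord lam 1 + coord lam 2 = 0 then coord lam 1 + 1 else coord lam 1 :=
        coord_sStar_succ (by omega) (by omega) lam
      by_cases hz : coord lam 1 + coord lam 2 = 0
      · rw [if_pos hz] at hA hB
        refine ⟨?_, ⟨1, ?_⟩, ?_, ?_⟩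
        · intro j hj
          exact coord_sStar_other (by omega) (by omega) lam
        · rw [hB]; norm_num
        · right
          refine ⟨hA, ?_⟩
          rw [hA, hB]
          linear_combination hz
        · intro i hi1 hi2
          omega
      · rw [if_neg hz] at hA hB
        refine ⟨?_, ⟨0, ?_⟩, ?_, ?_⟩
        · intro j hj
          exact coord_sStar_other (by omega) (by omega) lam
        · rw [hB]; norm_num
        · left
          refine ⟨hA, ?_⟩
          rw [hA, hB]
          intro hq
          exact hz (by linear_combination hq)
        · intro i hi1 hi2
          omega
    | succ M hM1 ih =>
      intro hMn
      obtain ⟨ha, ⟨T, hT⟩, hdich, hc⟩ := ih (by omega)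
      set ν := starAsc 1 M lam with hν
      have hstep : starAsc 1 (M + 1) lam = sStar (M + 1) ν := starAsc_succ M hM1 lam
      have haM2 : coord ν (M + 2) = coord lam (M + 2) := ha (M + 2) (by omega)
      have hA : coord (sStar (M + 1) ν) (M + 1)
          = if coord ν (M + 1) + coord ν (M + 2) = 0 then coord ν (M + 2) - 1
            else coord ν (M + 2) :=
        coord_sStar_self (by omega) (by omega) ν
      have hB : coord (sStar (M + 1) ν) (M + 2)
          = if coord ν (M + 1) + coord ν (M + 2) = 0 then coord ν (M + 1) + 1
            else coord ν (M + 1) :=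
        coord_sStar_succ (by omega) (by omega) ν
      rw [haM2] at hA hB
      have hcs0 : csucc (coord lam (M + 1)) (coord lam (M + 2)) :=
        h2 (M + 1) (by omega) (by omega)
      rw [hstep]
      simp only [show M + 1 + 1 = M + 2 from rfl]
      by_cases hz : coord ν (M + 1) + coord lam (M + 2) = 0
      · rw [if_pos hz] at hA hB
        refine ⟨?_, ⟨T + 1, ?_⟩, ?_, ?_⟩
        · intro j hj
          have e1 : coord (sStar (M + 1) ν) j = coord ν j :=
            coord_sStar_other (by omega) (by omega) ν
          rw [e1]
          exact ha j (by omega)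
        · rw [hB, hT]; push_cast; ring
        · right
          refine ⟨hA, ?_⟩
          rw [hA, hB]
          linear_combination hz
        · intro i hi2 hiM1
          by_cases hiM : i ≤ M
          · have e1 : coord (sStar (M + 1) ν) (i - 1) = coord ν (i - 1) :=
              coord_sStar_other (by omega) (by omega) ν
            have e2 : coord (sStar (M + 1) ν) i = coord ν i :=
              coord_sStar_other (by omega) (by omega) ν
            rw [e1, e2]
            exact hc i hi2 hiM
          · have hi : i = M + 1 := by omega
            subst hi
            simp only [Nat.add_sub_cancel]
            have eM : coord (sStar (M + 1) ν) M = coord ν M :=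
              coord_sStar_other (by omega) (by omega) ν
            rw [eM, hA]
            rcases hcs0 with ⟨d, hd, hdeq⟩ | ⟨hz1, hz2⟩
            · rcases hdich with ⟨he, _⟩ | ⟨he, _⟩
              · left
                exact ⟨d + 1, by omega, by rw [he]; push_cast; linear_combination hdeq⟩
              · left
                exact ⟨d, hd, by rw [he]; linear_combination hdeq⟩
            · exfalso
              apply h1k (M + 1) (by omega) (by omega)
              refine ⟨-(T : ℤ), ?_⟩
              have hν0 : coord ν (M + 1) = 0 := by
                rw [hz2] at hz
                linear_combination hz
              rw [hT] at hν0
              rw [hz1]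
              push_cast
              linear_combination hν0
      · rw [if_neg hz] at hA hB
        refine ⟨?_, ⟨T, ?_⟩, ?_, ?_⟩
        · intro j hj
          have e1 : coord (sStar (M + 1) ν) j = coord ν j :=
            coord_sStar_other (by omega) (by omega) ν
          rw [e1]
          exact ha j (by omega)
        · rw [hB, hT]
        · left
          refine ⟨hA, ?_⟩
          rw [hA, hB]
          intro hq
          exact hz (by linear_combination hq)
        · intro i hi2 hiM1
          by_cases hiM : i ≤ M
          · have e1 : coord (sStar (M + 1) ν) (i - 1) = coord ν (i - 1) :=
              coord_sStar_other (by omega) (by omega) ν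
            have e2 : coord (sStar (M + 1) ν) i = coord ν i :=
              coord_sStar_other (by omega) (by omega) ν
            rw [e1, e2]
            exact hc i hi2 hiM
          · have hi : i = M + 1 := by omega
            subst hi
            simp only [Nat.add_sub_cancel]
            have eM : coord (sStar (M + 1) ν) M = coord ν M :=
              coord_sStar_other (by omega) (by omega) ν
            rw [eM, hA]
            rcases hcs0 with ⟨d, hd, hdeq⟩ | ⟨hz1, hz2⟩
            · rcases hdich with ⟨he, _⟩ | ⟨he, hsum0⟩
              · left
                exact ⟨d, hd, by rw [he]; exact hdeq⟩
              · have hd2 : d ≠ 1 := by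
                  intro hd1
                  apply hz
                  rw [he] at hsum0
                  have hdc : (d : ℂ) = 1 := by rw [hd1]; norm_num
                  linear_combination hsum0 - hdeq - hdc
                left
                refine ⟨d - 1, by omega, ?_⟩
                rw [he]
                push_cast
                linear_combination hdeq
            · rcases hdich with ⟨he, _⟩ | ⟨he, hsum0⟩
              · right
                exact ⟨by rw [he, hz1], hz2⟩
              · exfalso
                apply h1k (M + 1) (by omega) (by omega)
                refine ⟨1 - (T : ℤ), ?_⟩
                rw [he, hz1] at hsum0
                rw [hT] at hsum0
                rw [hz1]
                push_cast
                linear_combination hsum0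
  obtain ⟨ha, ⟨T, hT⟩, hdich, hc⟩ := inv m hm1 hm2
  refine ⟨hc, ?_⟩
  intro s hs1 hs2
  rw [wlt_iff hs1 hs2 hn]
  rcases Nat.lt_or_ge s m with hsm | hsm
  · have h1' := hc (s + 1) (by omega) (by omega)
    simp only [Nat.add_sub_cancel] at h1'
    exact iff_of_false (not_not_intro (csucc_down h1')) (by omega)
  · rcases Nat.eq_or_lt_of_le hsm with heq | hlt
    · subst heq
      refine iff_of_true ?_ (Or.inl rfl)
      apply not_down
      rintro ⟨z, hzeq⟩
      apply h1k (m + 1) (by omega) (by omega)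
      rcases hdich with ⟨he, _⟩ | ⟨he, _⟩
      · refine ⟨-z - T, ?_⟩
        rw [he, hT] at hzeq
        push_cast
        linear_combination -hzeq
      · refine ⟨-z - T - 1, ?_⟩
        rw [he, hT] at hzeq
        push_cast
        linear_combination -hzeq
    · rcases Nat.eq_or_lt_of_le hlt with heq1 | hlt1
      · subst heq1
        refine iff_of_true ?_ (Or.inr rfl)
        apply not_down
        rintro ⟨z, hzeq⟩
        have e3 : coord (starAsc 1 m lam) (m + 1 + 1) = coord lam (m + 2) :=
          ha (m + 2) (by omega)
        rw [hT, e3] at hzeq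
        apply h1k (m + 2) (by omega) (by omega)
        refine ⟨z - T, ?_⟩
        push_cast
        linear_combination hzeq
      · have e1 : coord (starAsc 1 m lam) s = coord lam s := ha s (by omega)
        have e2 : coord (starAsc 1 m lam) (s + 1) = coord lam (s + 1) := ha (s + 1) (by omega)
        rw [e1, e2]
        exact iff_of_false (not_not_intro (csucc_down (h2 s (by omega) hs2))) (by omega)
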